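/- arXiv:2305.16657 — 2 statements merged into one kernel-verified Lean document; each statement's English description precedes it below -/
import Mathlib

section
/- Let ρ₀ be the trivial representation of SO(2) on ℝ and ρ₁ the standard representation mapping t ∈ SO(2) to the 2×2 rotation matrix. If K₁₁ : ℝ² → Matrix (Fin 2) (Fin 2) ℝ is SO(2)-steerable of type (ρ₁, ρ₁) and K₀₁ : ℝ² → Matrix (Fin 1) (Fin 2) ℝ is SO(2)-steerable of type (ρ₀, ρ₁), then the second order kernel K⁽²⁾(v₁, v₂) := K₁₁(v₁) ⊗ K₀₁(v₂) (Kronecker product) satisfies the second order steerability constraint K⁽²⁾(t⁻¹v₁, t⁻¹v₂) = ρ₁(t⁻¹) K⁽²⁾(v₁, v₂) (ρ₁(t) ⊗ ρ₁(t)) for all t ∈ SO(2) and v₁, v₂ ∈ ℝ². -/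
open Matrix Real MeasureTheory
open scoped Kronecker

/-- Rotation matrix of angle θ; SO(2) = {Rot θ | θ ∈ ℝ}. -/
noncomputable def Rot (θ : ℝ) : Matrix (Fin 2) (Fin 2) ℝ :=
  !![Real.cos θ, -Real.sin θ; Real.sin θ, Real.cos θ]

/-- A representation of SO(2), parameterized by angle: multiplicative and 2π-periodic. -/
def IsRep {d : ℕ} (ρ : ℝ → Matrix (Fin d) (Fin d) ℝ) : Prop :=
  ρ 0 = 1 ∧ (∀ a b, ρ (a + b) = ρ a * ρ b) ∧ ∀ a, ρ (a + 2 * Real.pi) = ρ a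

/-- Proposition 3.5: the Kronecker product of a first order steerable kernel of type (ρ₁, ρ₁)
with one of type (ρ₀, ρ₁) is a second order SO(2)-steerable kernel of type (ρ₁, ρ₁),
where ρ₀ is trivial and ρ₁ is the standard representation θ ↦ Rot θ. -/
theorem second_order_kernel_steerable
    (K11 : (Fin 2 → ℝ) → Matrix (Fin 2) (Fin 2) ℝ)
    (K01 : (Fin 2 → ℝ) → Matrix (Fin 1) (Fin 2) ℝ)
    (h11 : ∀ (θ : ℝ) (v : Fin 2 → ℝ), K11 ((Rot (-θ)).mulVec v) = Rot (-θ) * K11 v * Rot θ)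
    (h01 : ∀ (θ : ℝ) (v : Fin 2 → ℝ), K01 ((Rot (-θ)).mulVec v) = (1 : ℝ) • K01 v * Rot θ) :
    ∀ (θ : ℝ) (v₁ v₂ : Fin 2 → ℝ),
      K11 ((Rot (-θ)).mulVec v₁) ⊗ₖ K01 ((Rot (-θ)).mulVec v₂) =
        (Rot (-θ) ⊗ₖ (1 : Matrix (Fin 1) (Fin 1) ℝ)) * (K11 v₁ ⊗ₖ K01 v₂) *
          (Rot θ ⊗ₖ Rot θ) := by
  intro θ v₁ v₂
  rw [h11, h01, one_smul, ← Matrix.mul_kronecker_mul, ← Matrix.mul_kronecker_mul,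
    Matrix.one_mul, mul_assoc]
end

section
/- Let K⁽¹⁾ₐ be SO(2)-steerable of type (ρ_a, ρ_in) and K⁽¹⁾_b be SO(2)-steerable of type (ρ_b, ρ_in), for representations ρ_a : SO(2) → GL(d_a, ℝ), ρ_b : SO(2) → GL(d_b, ℝ), ρ_in : SO(2) → GL(d_in, ℝ). Then the second order kernel K⁽²⁾(v₁, v₂) := K⁽¹⁾ₐ(v₁) ⊗ K⁽¹⁾_b(v₂) is second order steerable of type (ρ_a ⊗ ρ_b, ρ_in): K⁽²⁾(t⁻¹v₁, t⁻¹v₂) = (ρ_a ⊗ ρ_b)(t⁻¹) K⁽²⁾(v₁, v₂) (ρ_in(t) ⊗ ρ_in(t)) for all t ∈ SO(2). -/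
open Matrix Real
open scoped Kronecker

/-- The Kronecker product of first order steerable kernels of types (ρ_a, ρ_in) and
(ρ_b, ρ_in) is a second order steerable kernel of type (ρ_a ⊗ ρ_b, ρ_in). -/
theorem kron_of_steerable_is_second_order_steerable {da db din : ℕ}
    (ρa : ℝ → Matrix (Fin da) (Fin da) ℝ) (ρb : ℝ → Matrix (Fin db) (Fin db) ℝ)
    (ρin : ℝ → Matrix (Fin din) (Fin din) ℝ)
    (ha : IsRep ρa) (hb : IsRep ρb) (hin : IsRep ρin)
    (Ka : (Fin 2 → ℝ) → Matrix (Fin da) (Fin din) ℝ)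
    (Kb : (Fin 2 → ℝ) → Matrix (Fin db) (Fin din) ℝ)
    (hKa : ∀ (θ : ℝ) (v : Fin 2 → ℝ), Ka ((Rot (-θ)).mulVec v) = ρa (-θ) * Ka v * ρin θ)
    (hKb : ∀ (θ : ℝ) (v : Fin 2 → ℝ), Kb ((Rot (-θ)).mulVec v) = ρb (-θ) * Kb v * ρin θ) :
    ∀ (θ : ℝ) (v₁ v₂ : Fin 2 → ℝ),
      Ka ((Rot (-θ)).mulVec v₁) ⊗ₖ Kb ((Rot (-θ)).mulVec v₂) =
        (ρa (-θ) ⊗ₖ ρb (-θ)) * (Ka v₁ ⊗ₖ Kb v₂) * (ρin θ ⊗ₖ ρin θ) := by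
  intro θ v₁ v₂
  rw [hKa, hKb, ← Matrix.mul_kronecker_mul, ← Matrix.mul_kronecker_mul]
end
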